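/- Let P be a partial latin square of order n whose filled cells are those in the upper-left r×s rectangle except for t empty cells inside the rectangle, with at most one such empty cell in each column. Then P is completable to a latin square of order n if and only if P satisfies Hall's Condition. -/

import Mathlib

open scoped Classical

section PLS

variable {n : ℕ}

/-- A partial latin square of order `n`: an `n × n` array of optional symbols,
no symbol occurring twice in any row or column. -/
def IsPLS (n : ℕ) (P : Fin n → Fin n → Option (Fin n)) : Prop :=
  (∀ i j j' σ, P i j = some σ → P i j' = some σ → j = j') ∧
  (∀ i i' j σ, P i j = some σ → P i' j = some σ → i = i')

/-- `σ` is missing from row `i`. -/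
def MissingRow (P : Fin n → Fin n → Option (Fin n)) (σ i : Fin n) : Prop :=
  ∀ j, P i j ≠ some σ

/-- `σ` is missing from column `j`. -/
def MissingCol (P : Fin n → Fin n → Option (Fin n)) (σ j : Fin n) : Prop :=
  ∀ i, P i j ≠ some σ

/-- A cell supports `σ` if it contains `σ`, or is empty and `σ` is missing from
its row and column. -/
def Supports (P : Fin n → Fin n → Option (Fin n)) (σ : Fin n) (c : Fin n × Fin n) : Prop :=
  P c.1 c.2 = some σ ∨ (P c.1 c.2 = none ∧ MissingRow P σ c.1 ∧ MissingCol P σ c.2)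

/-- A set of cells is independent if no two share a row or a column. -/
def IndepCells (S : Finset (Fin n × Fin n)) : Prop :=
  ∀ c ∈ S, ∀ c' ∈ S, c ≠ c' → c.1 ≠ c'.1 ∧ c.2 ≠ c'.2

/-- `alpha P σ T` : max size of an independent subset of `T` all of whose cells support `σ`. -/
noncomputable def alpha (P : Fin n → Fin n → Option (Fin n)) (σ : Fin n)
    (T : Finset (Fin n × Fin n)) : ℕ :=
  (T.powerset.filter (fun S => IndepCells S ∧ ∀ c ∈ S, Supports P σ c)).sup Finset.card

/-- Hall's Condition: every set of cells satisfies the Hall Inequality. -/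
def HallCond (n : ℕ) (P : Fin n → Fin n → Option (Fin n)) : Prop :=
  ∀ T : Finset (Fin n × Fin n), T.card ≤ ∑ σ : Fin n, alpha P σ T

/-- A latin square of order `n`. -/
def IsLatin (n : ℕ) (L : Fin n → Fin n → Fin n) : Prop :=
  (∀ i, Function.Injective (L i)) ∧ (∀ j, Function.Injective fun i => L i j)

/-- `L` is a completion of `P`. -/
def Completes (n : ℕ) (P : Fin n → Fin n → Option (Fin n)) (L : Fin n → Fin n → Fin n) : Prop :=
  IsLatin n L ∧ ∀ i j σ, P i j = some σ → L i j = σ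

end PLS


/-!
Necessity: in a completion `L`, the cells of `T` holding `σ` form an independent set supporting
`σ`, and these sets partition `T`.

Sufficiency: by Ryser's theorem, an `r × s` latin rectangle on `n` symbols completes as soon as
every symbol occurs at least `r + s - n` times. So it suffices to fill the holes of `P` so that
each hole gets a symbol it supports, no symbol is repeated in a row (columns are safe, as they
contain at most one hole), and each symbol `σ` lands in at least `deficiency σ` holes. This is a
matching problem with demands, solved by Hall's marriage theorem on a bipartite graph padded with
dummy vertices. Hall's condition for that graph reduces to two inequalities, which are Hall's
Condition of `P` for a set `K` of holes and for `K` together with the empty cells outside the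
rectangle.
-/

open Finset

variable {n : ℕ}

section Necessity

variable {P : Fin n → Fin n → Option (Fin n)} {L : Fin n → Fin n → Fin n}

theorem Completes.supports (hL : Completes n P L) (c : Fin n × Fin n) :
    Supports P (L c.1 c.2) c := by
  obtain ⟨⟨hrow, hcol⟩, hagree⟩ := hL
  rcases hc : P c.1 c.2 with _ | τ
  · refine .inr ⟨hc, fun j hj => ?_, fun i hi => ?_⟩
    · have := hrow c.1 (hagree _ _ _ hj)
      simp_all
    · have := hcol c.2 (hagree _ _ _ hi)
      simp_all
  · exact .inl (by rw [hc, hagree _ _ _ hc])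

theorem Completes.indepCells_filter (hL : Completes n P L) (T : Finset (Fin n × Fin n))
    (σ : Fin n) : IndepCells {c ∈ T | L c.1 c.2 = σ} := by
  obtain ⟨⟨hrow, hcol⟩, -⟩ := hL
  intro c hc c' hc' hne
  simp only [mem_filter] at hc hc'
  refine ⟨fun h1 => hne (Prod.ext h1 (hrow c.1 ?_)), fun h2 => hne (Prod.ext (hcol c.2 ?_) h2)⟩
  · rw [hc.2, h1, hc'.2]
  · change L c.1 c.2 = L c'.1 c.2
    rw [hc.2, h2, hc'.2]

theorem Completes.hallCond (hL : Completes n P L) : HallCond n P := by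
  intro T
  rw [card_eq_sum_card_fiberwise (f := fun c => L c.1 c.2) (fun c _ => mem_univ _)]
  refine sum_le_sum fun σ _ => le_sup (f := card) ?_
  refine mem_filter.2 ⟨mem_powerset.2 (filter_subset _ _), hL.indepCells_filter T σ, ?_⟩
  intro c hc
  rw [← (mem_filter.1 hc).2]
  exact hL.supports c

end Necessity

theorem card_fin_val_lt {m : ℕ} (hm : m ≤ n) : #{i : Fin n | (i : ℕ) < m} = m := by
  rw [Fin.card_filter_val_lt, min_eq_right hm]

theorem card_fin_val_not_lt {m : ℕ} (hm : m ≤ n) : #{i : Fin n | ¬ (i : ℕ) < m} = n - m := by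
  have := card_filter_add_card_filter_not (s := univ) fun i : Fin n => (i : ℕ) < m
  rw [card_fin_val_lt hm, card_univ, Fintype.card_fin] at this
  omega

section LatinRectangle

variable {Q : Fin n → Fin n → Option (Fin n)}

def symbolRows (Q : Fin n → Fin n → Option (Fin n)) (σ : Fin n) : Finset (Fin n) :=
  {i | ∃ j, Q i j = some σ}

theorem IsPLS.card_rowSymbols (hQ : IsPLS n Q) (i : Fin n) :
    #{σ | ∃ j, Q i j = some σ} = #{j | Q i j ≠ none} := by
  have himage : ({j | Q i j ≠ none} : Finset (Fin n)).image (Q i) =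
      ({σ | ∃ j, Q i j = some σ} : Finset (Fin n)).image some := by
    ext x
    cases x with
    | none => simp
    | some σ =>
      simpa [eq_comm] using exists_congr fun j => and_iff_right_of_imp fun h => by simp [h]
  rw [← card_image_of_injective _ (Option.some_injective _), ← himage,
    card_image_of_injOn fun j hj j' _ h => ?_]
  obtain ⟨σ, hσ⟩ := Option.ne_none_iff_exists'.1 (mem_filter.1 hj).2
  exact hQ.1 i j j' σ hσ (h ▸ hσ)

theorem IsPLS.sum_card_symbolRows (hQ : IsPLS n Q) :
    ∑ σ, #(symbolRows Q σ) = #{c : Fin n × Fin n | Q c.1 c.2 ≠ none} := by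
  simp only [symbolRows, card_filter]
  rw [sum_comm, Fintype.sum_prod_type]
  refine sum_congr rfl fun i _ => ?_
  simp only [← card_filter, hQ.card_rowSymbols]

theorem card_missingRow_add_card_symbolRows (σ : Fin n) :
    #{i | MissingRow Q σ i} + #(symbolRows Q σ) = n := by
  have := card_filter_add_card_filter_not (s := univ) fun i => ∃ j, Q i j = some σ
  simp only [card_univ, Fintype.card_fin, not_exists] at this
  rw [symbolRows, add_comm]
  convert this using 3
  exact filter_congr fun i _ => Iff.rfl

def IsLatinRect (n r s : ℕ) (Q : Fin n → Fin n → Option (Fin n)) : Prop :=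
  IsPLS n Q ∧ ∀ i j : Fin n, Q i j ≠ none ↔ (i : ℕ) < r ∧ (j : ℕ) < s

def RyserCondition (n r s : ℕ) (Q : Fin n → Fin n → Option (Fin n)) : Prop :=
  ∀ σ, r + s ≤ n + #(symbolRows Q σ)

def Extends (Q Q' : Fin n → Fin n → Option (Fin n)) : Prop :=
  ∀ i j σ, Q i j = some σ → Q' i j = some σ

theorem Extends.trans {Q Q' Q'' : Fin n → Fin n → Option (Fin n)} (h : Extends Q Q')
    (h' : Extends Q' Q'') : Extends Q Q'' :=
  fun i j σ hσ => h' i j σ (h i j σ hσ)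

theorem Completes.of_extends {Q' : Fin n → Fin n → Option (Fin n)} {L : Fin n → Fin n → Fin n}
    (hL : Completes n Q' L) (h : Extends Q Q') : Completes n Q L :=
  ⟨hL.1, fun i j σ hσ => hL.2 i j σ (h i j σ hσ)⟩

theorem Extends.symbolRows_subset {Q' : Fin n → Fin n → Option (Fin n)} (h : Extends Q Q')
    (σ : Fin n) : symbolRows Q σ ⊆ symbolRows Q' σ := by
  intro i hi
  obtain ⟨j, hj⟩ := (mem_filter.1 hi).2
  exact mem_filter.2 ⟨mem_univ _, j, h i j σ hj⟩

namespace IsLatinRect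

variable {r s : ℕ} (hQ : IsLatinRect n r s Q)
include hQ

theorem card_missingRow (hsn : s ≤ n) {i : Fin n} (hi : (i : ℕ) < r) :
    #{σ | MissingRow Q σ i} = n - s := by
  have hfilled : #{j | Q i j ≠ none} = s := by
    simp only [hQ.2, hi, true_and, card_fin_val_lt hsn]
  have hsplit := card_filter_add_card_filter_not (s := univ) fun σ => ∃ j, Q i j = some σ
  rw [hQ.1.card_rowSymbols, hfilled, card_univ, Fintype.card_fin] at hsplit
  simp only [MissingRow, ne_eq, ← not_exists]
  omega

theorem symbolRows_subset (σ : Fin n) : symbolRows Q σ ⊆ ({i | (i : ℕ) < r} : Finset (Fin n)) := by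
  intro i hi
  obtain ⟨j, hj⟩ := (mem_filter.1 hi).2
  exact mem_filter.2 ⟨mem_univ _, ((hQ.2 i j).1 (by simp [hj])).1⟩

theorem card_rows_missing (hrn : r ≤ n) (σ : Fin n) :
    #{i : Fin n | (i : ℕ) < r ∧ MissingRow Q σ i} = r - #(symbolRows Q σ) := by
  have : ({i : Fin n | (i : ℕ) < r ∧ MissingRow Q σ i} : Finset (Fin n)) =
      ({i | (i : ℕ) < r} : Finset (Fin n)) \ symbolRows Q σ := by
    ext i
    simp only [symbolRows, mem_sdiff, mem_filter, mem_univ, true_and, not_exists]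
    rfl
  rw [this, card_sdiff_of_subset (hQ.symbolRows_subset σ), card_fin_val_lt hrn]

end IsLatinRect

end LatinRectangle

section ColumnExtension

variable {r s : ℕ} {Q : Fin n → Fin n → Option (Fin n)}

/-- Rows below the rectangle may only take symbols that are not tight for the Ryser condition;
as a system of distinct representatives uses every symbol, each tight symbol then lands in the new
column. -/
noncomputable def columnCandidates (n r s : ℕ) (Q : Fin n → Fin n → Option (Fin n)) (i : Fin n) :
    Finset (Fin n) :=
  if (i : ℕ) < r then univ.filter (MissingRow Q · i)
  else univ.filter fun σ => r + s < n + #(symbolRows Q σ)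

variable (hQ : IsLatinRect n r s Q) (hR : RyserCondition n r s Q) (hrn : r ≤ n) (hsn : s < n)
include hQ hR hrn hsn

theorem card_le_card_biUnion_columnCandidates_of_forall_lt {S : Finset (Fin n)}
    (hS : ∀ i ∈ S, (i : ℕ) < r) : #S ≤ #(S.biUnion (columnCandidates n r s Q)) := by
  refine Nat.le_of_mul_le_mul_right
    (card_mul_le_card_mul (fun i σ => σ ∈ columnCandidates n r s Q i) (m := n - s) (n := n - s)
      (fun i hi => ?_) (fun σ _ => ?_)) (by omega)
  · rw [bipartiteAbove, filter_mem_eq_inter, inter_eq_right.2 (subset_biUnion_of_mem _ hi),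
      columnCandidates, if_pos (hS i hi), hQ.card_missingRow hsn.le (hS i hi)]
  · calc #(S.bipartiteBelow _ σ) ≤ #{i : Fin n | (i : ℕ) < r ∧ MissingRow Q σ i} := by
          refine card_le_card fun i hi => ?_
          obtain ⟨hiS, hσ⟩ := mem_filter.1 hi
          rw [columnCandidates, if_pos (hS i hiS)] at hσ
          exact mem_filter.2 ⟨mem_univ _, hS i hiS, (mem_filter.1 hσ).2⟩
      _ = r - #(symbolRows Q σ) := hQ.card_rows_missing hrn σ
      _ ≤ n - s := by have := hR σ; omega

/-- A tight symbol that no row of `S₁` may take is missing only from the `n - s` rows of the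
rectangle outside `S₁`, and each of these rows misses just `n - s` symbols. -/
theorem card_tight_sdiff_biUnion_columnCandidates_add_card_le {S₁ : Finset (Fin n)}
    (hS₁ : ∀ i ∈ S₁, (i : ℕ) < r) :
    #((univ.filter fun σ => ¬ r + s < n + #(symbolRows Q σ)) \
      S₁.biUnion (columnCandidates n r s Q)) + #S₁ ≤ r := by
  set X := (univ.filter fun σ => ¬ r + s < n + #(symbolRows Q σ)) \
    S₁.biUnion (columnCandidates n r s Q)
  have hS₁top : S₁ ⊆ ({i | (i : ℕ) < r} : Finset (Fin n)) := fun i hi =>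
    mem_filter.2 ⟨mem_univ _, hS₁ i hi⟩
  suffices #X ≤ #(({i | (i : ℕ) < r} : Finset (Fin n)) \ S₁) by
    rw [card_sdiff_of_subset hS₁top, card_fin_val_lt hrn] at this
    have := card_le_card hS₁top
    rw [card_fin_val_lt hrn] at this
    omega
  refine Nat.le_of_mul_le_mul_right (card_mul_le_card_mul (fun σ i => MissingRow Q σ i)
    (m := n - s) (n := n - s) (fun σ hσ => ?_) (fun i hi => ?_)) (by omega)
  · obtain ⟨hσ, hσS₁⟩ := mem_sdiff.1 hσ
    have htight : #(symbolRows Q σ) + (n - s) = r := by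
      have := hR σ; have := (mem_filter.1 hσ).2; omega
    calc n - s = #{i : Fin n | (i : ℕ) < r ∧ MissingRow Q σ i} := by
          rw [hQ.card_rows_missing hrn]; omega
      _ ≤ _ := by
        refine card_le_card fun i hi => ?_
        obtain ⟨hir, hmiss⟩ := (mem_filter.1 hi).2
        refine mem_filter.2 ⟨mem_sdiff.2 ⟨mem_filter.2 ⟨mem_univ _, hir⟩, fun hiS₁ => ?_⟩, hmiss⟩
        refine hσS₁ (mem_biUnion.2 ⟨i, hiS₁, ?_⟩)
        rw [columnCandidates, if_pos hir]
        exact mem_filter.2 ⟨mem_univ _, hmiss⟩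
  · have hir : (i : ℕ) < r := (mem_filter.1 (mem_sdiff.1 hi).1).2
    calc #(X.bipartiteBelow _ i) ≤ #{σ | MissingRow Q σ i} :=
          card_le_card fun σ hσ => mem_filter.2 ⟨mem_univ _, (mem_filter.1 hσ).2⟩
      _ = n - s := hQ.card_missingRow hsn.le hir

theorem card_le_card_biUnion_columnCandidates_of_exists_le {S : Finset (Fin n)}
    (hS : ∃ i ∈ S, r ≤ (i : ℕ)) : #S ≤ #(S.biUnion (columnCandidates n r s Q)) := by
  obtain ⟨i₀, hi₀S, hi₀⟩ := hS
  set S₁ := S.filter fun i : Fin n => (i : ℕ) < r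
  set X := (univ.filter fun σ => ¬ r + s < n + #(symbolRows Q σ)) \
    S₁.biUnion (columnCandidates n r s Q)
  have hX : #X + #S₁ ≤ r :=
    card_tight_sdiff_biUnion_columnCandidates_add_card_le hQ hR hrn hsn fun i hi =>
      (mem_filter.1 hi).2
  have hcover : univ \ X ⊆ S.biUnion (columnCandidates n r s Q) := by
    intro σ hσ
    by_cases hslack : r + s < n + #(symbolRows Q σ)
    · refine mem_biUnion.2 ⟨i₀, hi₀S, ?_⟩
      rw [columnCandidates, if_neg (by omega)]
      exact mem_filter.2 ⟨mem_univ _, hslack⟩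
    · have : σ ∈ S₁.biUnion (columnCandidates n r s Q) := by
        by_contra h
        exact (mem_sdiff.1 hσ).2 (mem_sdiff.2 ⟨mem_filter.2 ⟨mem_univ _, hslack⟩, h⟩)
      exact biUnion_subset_biUnion_of_subset_left _ (filter_subset _ _) this
  have hbottom : #(S.filter fun i : Fin n => ¬ (i : ℕ) < r) ≤ n - r :=
    (card_le_card (filter_subset_filter _ (subset_univ S))).trans_eq (card_fin_val_not_lt hrn)
  have hsplit : #S₁ + #(S.filter fun i : Fin n => ¬ (i : ℕ) < r) = #S :=
    card_filter_add_card_filter_not _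
  have hcomp := card_le_card hcover
  rw [card_sdiff_of_subset (subset_univ _), card_univ, Fintype.card_fin] at hcomp
  have := card_le_univ X
  rw [Fintype.card_fin] at this
  omega

theorem exists_injective_columnCandidates :
    ∃ F : Fin n → Fin n, Function.Injective F ∧ ∀ i, F i ∈ columnCandidates n r s Q i := by
  refine (all_card_le_biUnion_card_iff_exists_injective _).1 fun S => ?_
  by_cases hS : ∀ i ∈ S, (i : ℕ) < r
  · exact card_le_card_biUnion_columnCandidates_of_forall_lt hQ hR hrn hsn hS
  · push Not at hS
    exact card_le_card_biUnion_columnCandidates_of_exists_le hQ hR hrn hsn hS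

omit hQ hR hrn hsn

def addColumn (r s : ℕ) (Q : Fin n → Fin n → Option (Fin n)) (F : Fin n → Fin n) :
    Fin n → Fin n → Option (Fin n) :=
  fun i j => if (i : ℕ) < r ∧ (j : ℕ) = s then some (F i) else Q i j

theorem IsLatinRect.extends_addColumn (hQ : IsLatinRect n r s Q) (F : Fin n → Fin n) :
    Extends Q (addColumn r s Q F) := by
  intro i j σ h
  have := ((hQ.2 i j).1 (by simp [h])).2
  rw [addColumn, if_neg (by omega), h]

theorem IsLatinRect.addColumn {F : Fin n → Fin n} (hQ : IsLatinRect n r s Q)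
    (hF : Function.Injective F) (hFmiss : ∀ i : Fin n, (i : ℕ) < r → MissingRow Q (F i) i) :
    IsLatinRect n r (s + 1) (addColumn r s Q F) := by
  refine ⟨⟨fun i j j' σ h h' => ?_, fun i i' j σ h h' => ?_⟩, fun i j => ?_⟩ <;>
    simp only [_root_.addColumn] at *
  · by_cases hj : (i : ℕ) < r ∧ (j : ℕ) = s <;> by_cases hj' : (i : ℕ) < r ∧ (j' : ℕ) = s
    · exact Fin.ext (hj.2.trans hj'.2.symm)
    · rw [if_pos hj] at h; rw [if_neg hj'] at h'
      exact absurd (Option.some_inj.1 h ▸ h') (hFmiss i hj.1 j')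
    · rw [if_neg hj] at h; rw [if_pos hj'] at h'
      exact absurd (Option.some_inj.1 h' ▸ h) (hFmiss i hj'.1 j)
    · rw [if_neg hj] at h; rw [if_neg hj'] at h'
      exact hQ.1.1 i j j' σ h h'
  · have hnew : ∀ i, Q i j = some σ → ¬ (j : ℕ) = s := fun i hi =>
      (Nat.ne_of_lt ((hQ.2 i j).1 (by simp [hi])).2)
    by_cases hi : (i : ℕ) < r ∧ (j : ℕ) = s <;> by_cases hi' : (i' : ℕ) < r ∧ (j : ℕ) = s
    · rw [if_pos hi] at h; rw [if_pos hi'] at h'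
      exact hF (Option.some_inj.1 (h.trans h'.symm))
    · rw [if_neg hi'] at h'
      exact absurd hi.2 (hnew i' h')
    · rw [if_neg hi] at h
      exact absurd hi'.2 (hnew i h)
    · rw [if_neg hi] at h; rw [if_neg hi'] at h'
      exact hQ.1.2 i i' j σ h h'
  · split_ifs with hij
    · simp only [ne_eq, reduceCtorEq, not_false_eq_true, true_iff]
      omega
    · rw [hQ.2 i j]
      omega

theorem RyserCondition.addColumn {F : Fin n → Fin n} (hR : RyserCondition n r s Q)
    (hQ : IsLatinRect n r s Q) (hsn : s < n) (hF : Function.Injective F)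
    (hFcand : ∀ i, F i ∈ columnCandidates n r s Q i) :
    RyserCondition n r (s + 1) (_root_.addColumn r s Q F) := by
  intro σ
  obtain ⟨i, rfl⟩ := Finite.injective_iff_surjective.1 hF σ
  have hsub := (hQ.extends_addColumn F).symbolRows_subset (F i)
  have hcand := hFcand i
  rw [columnCandidates] at hcand
  split_ifs at hcand with hi
  · have hnew : i ∈ symbolRows (_root_.addColumn r s Q F) (F i) :=
      mem_filter.2 ⟨mem_univ _, ⟨s, hsn⟩, by simp [_root_.addColumn, hi]⟩
    have hold : i ∉ symbolRows Q (F i) := fun h =>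
      let ⟨j, hj⟩ := (mem_filter.1 h).2
      (mem_filter.1 hcand).2 j hj
    have := card_le_card (insert_subset hnew hsub)
    rw [card_insert_of_notMem hold] at this
    have := hR (F i)
    omega
  · have := (mem_filter.1 hcand).2
    have := card_le_card hsub
    omega

theorem IsLatinRect.exists_extends_addColumn (hQ : IsLatinRect n r s Q)
    (hR : RyserCondition n r s Q) (hrn : r ≤ n) (hsn : s < n) :
    ∃ Q', IsLatinRect n r (s + 1) Q' ∧ RyserCondition n r (s + 1) Q' ∧ Extends Q Q' := by
  obtain ⟨F, hF, hFcand⟩ := exists_injective_columnCandidates hQ hR hrn hsn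
  have hFmiss : ∀ i : Fin n, (i : ℕ) < r → MissingRow Q (F i) i := fun i hi => by
    simpa [columnCandidates, hi] using hFcand i
  exact ⟨_, hQ.addColumn hF hFmiss, hR.addColumn hQ hsn hF hFcand, hQ.extends_addColumn F⟩

theorem IsLatinRect.exists_extends_full_width {s : ℕ} {Q : Fin n → Fin n → Option (Fin n)}
    (hQ : IsLatinRect n r s Q)
    (hR : RyserCondition n r s Q) (hrn : r ≤ n) (hsn : s ≤ n) :
    ∃ Q', IsLatinRect n r n Q' ∧ Extends Q Q' := by
  rcases hsn.lt_or_eq with hlt | rfl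
  · obtain ⟨Q₁, hQ₁, hR₁, hext₁⟩ := hQ.exists_extends_addColumn hR hrn hlt
    obtain ⟨Q₂, hQ₂, hext₂⟩ := hQ₁.exists_extends_full_width hR₁ hrn hlt
    exact ⟨Q₂, hQ₂, hext₁.trans hext₂⟩
  · exact ⟨Q, hQ, fun _ _ _ => id⟩
termination_by n - s

end ColumnExtension

section Completion

variable {r s : ℕ} {Q : Fin n → Fin n → Option (Fin n)}

theorem IsLatinRect.transpose (hQ : IsLatinRect n r s Q) :
    IsLatinRect n s r fun i j => Q j i :=
  ⟨⟨fun i j j' σ h h' => hQ.1.2 j j' i σ h h', fun i i' j σ h h' => hQ.1.1 j i i' σ h h'⟩,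
    fun i j => (hQ.2 j i).trans and_comm⟩

theorem IsLatinRect.exists_mem_row_of_full_width (hQ : IsLatinRect n r n Q) {i : Fin n}
    (hi : (i : ℕ) < r) (σ : Fin n) : ∃ j, Q i j = some σ := by
  have hfull : #{σ | ∃ j, Q i j = some σ} = Fintype.card (Fin n) := by
    simp only [hQ.1.card_rowSymbols, hQ.2, hi, true_and, Fin.is_lt, filter_true, card_univ]
  have hσ : σ ∈ ({σ | ∃ j, Q i j = some σ} : Finset (Fin n)) := by
    rw [eq_univ_of_card _ hfull]
    exact mem_univ σ
  exact (mem_filter.1 hσ).2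

theorem IsLatinRect.ryserCondition_transpose (hQ : IsLatinRect n r n Q) (hrn : r ≤ n) :
    RyserCondition n n r fun i j => Q j i := by
  intro σ
  have : #({i | (i : ℕ) < r} : Finset (Fin n)) ≤ #(symbolRows (fun i j => Q j i) σ) :=
    card_le_card_of_forall_subsingleton (fun i j => Q i j = some σ)
      (fun i hi => let ⟨j, hj⟩ := hQ.exists_mem_row_of_full_width (mem_filter.1 hi).2 σ
        ⟨j, mem_filter.2 ⟨mem_univ _, i, hj⟩, hj⟩)
      (fun j _ i hi i' hi' => hQ.1.2 i i' j σ hi.2 hi'.2)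
  rw [card_fin_val_lt hrn] at this
  omega

theorem IsLatinRect.exists_completes_of_full (hQ : IsLatinRect n n n Q) :
    ∃ L, Completes n Q L := by
  have hsome : ∀ i j, Q i j = some ((Q i j).getD j) := fun i j => by
    obtain ⟨σ, hσ⟩ := Option.ne_none_iff_exists'.1 ((hQ.2 i j).2 ⟨i.2, j.2⟩)
    simp [hσ]
  refine ⟨fun i j => (Q i j).getD j,
    ⟨fun i j j' h => hQ.1.1 i j j' _ (hsome i j) ((hsome i j').trans (congrArg some h.symm)),
      fun j i i' h => hQ.1.2 i i' j _ (hsome i j) ((hsome i' j).trans (congrArg some h.symm))⟩,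
    fun i j σ h => by simp [h]⟩

/-- Ryser's theorem. -/
theorem IsLatinRect.exists_completes (hQ : IsLatinRect n r s Q) (hR : RyserCondition n r s Q)
    (hrn : r ≤ n) (hsn : s ≤ n) : ∃ L, Completes n Q L := by
  obtain ⟨Q₁, hQ₁, hext₁⟩ := hQ.exists_extends_full_width hR hrn hsn
  obtain ⟨Q₂, hQ₂, hext₂⟩ :=
    hQ₁.transpose.exists_extends_full_width (hQ₁.ryserCondition_transpose hrn) le_rfl hrn
  obtain ⟨L, hL⟩ := hQ₂.transpose.exists_completes_of_full
  exact ⟨L, hL.of_extends (hext₁.trans fun i j σ h => hext₂ j i σ h)⟩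

end Completion

section Assignment

variable {α R Sym : Type*} [Fintype R] [DecidableEq R] [Fintype Sym] [DecidableEq Sym]
  {H : Finset α} {row : α → R} {adm : α → Sym → Prop} {D : Sym → ℕ}

noncomputable def admittingRows (row : α → R) (adm : α → Sym → Prop) (K : Finset α) (σ : Sym) :
    Finset R :=
  (K.filter (adm · σ)).image row

/-- A cell `c` of `H` may take the slot `(σ, row c)` of any symbol `σ` it admits; each symbol `σ`
also gets `|R| - D σ` dummies, which may take any slot `(σ, i)` and any of the `|H| - ∑ D` spare
vertices. A perfect matching leaves at most `|R| - D σ` slots of `σ` to dummies, so at least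
`D σ` cells receive `σ`, at most one per row. -/
noncomputable def assignmentGraph (H : Finset α) (row : α → R) (adm : α → Sym → Prop)
    (D : Sym → ℕ) :
    H ⊕ (Σ σ : Sym, Fin (Fintype.card R - D σ)) → Finset ((Sym × R) ⊕ Fin (#H - ∑ σ, D σ))
  | .inl c => (univ.filter (adm c.1)).image fun σ => .inl (σ, row c.1)
  | .inr d => (univ.image fun i => .inl (d.1, i)) ∪ univ.image .inr

/-- The slots adjacent to the cells of `K` and to the dummies of the symbols in `Z`. -/
noncomputable def reachableSlots (row : α → R) (adm : α → Sym → Prop) (K : Finset α)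
    (Z : Finset Sym) : Finset (Sym × R) :=
  univ.filter fun p => p.1 ∈ Z ∨ p.2 ∈ admittingRows row adm K p.1

theorem card_reachableSlots (K : Finset α) (Z : Finset Sym) :
    #(reachableSlots row adm K Z) =
      ∑ σ, if σ ∈ Z then Fintype.card R else #(admittingRows row adm K σ) := by
  rw [reachableSlots, card_filter, Fintype.sum_prod_type]
  refine sum_congr rfl fun σ _ => ?_
  by_cases hσ : σ ∈ Z <;> simp [hσ]

theorem map_inl_reachableSlots_subset (S : Finset (H ⊕ (Σ σ : Sym, Fin (Fintype.card R - D σ)))) :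
    (reachableSlots row adm (S.toLeft.map (.subtype (· ∈ H))) (S.toRight.image Sigma.fst)).map
      .inl ⊆ S.biUnion (assignmentGraph H row adm D) := by
  intro x hx
  obtain ⟨⟨σ, i⟩, hp, rfl⟩ := mem_map.1 hx
  rcases (mem_filter.1 hp).2 with hσ | hi
  · obtain ⟨d, hd, rfl⟩ := mem_image.1 hσ
    exact mem_biUnion.2 ⟨.inr d, mem_toRight.1 hd,
      mem_union_left _ (mem_image.2 ⟨i, mem_univ _, rfl⟩)⟩
  · obtain ⟨c, hc, rfl⟩ := mem_image.1 hi
    obtain ⟨hcK, hadm⟩ := mem_filter.1 hc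
    obtain ⟨c', hc', rfl⟩ := mem_map.1 hcK
    exact mem_biUnion.2 ⟨.inl c', mem_toLeft.1 hc',
      mem_image.2 ⟨σ, mem_filter.2 ⟨mem_univ _, hadm⟩, rfl⟩⟩

omit [DecidableEq R] in
theorem card_le_card_toLeft_add_sum_dummies
    (S : Finset (H ⊕ (Σ σ : Sym, Fin (Fintype.card R - D σ)))) :
    #S ≤ #S.toLeft +
      ∑ σ, if σ ∈ S.toRight.image Sigma.fst then Fintype.card R - D σ else 0 := by
  have hright : #S.toRight ≤ #((S.toRight.image Sigma.fst).sigma fun σ =>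
      (univ : Finset (Fin (Fintype.card R - D σ)))) :=
    card_le_card fun d hd => mem_sigma.2 ⟨mem_image_of_mem _ hd, mem_univ _⟩
  simp only [card_sigma, card_univ, Fintype.card_fin] at hright
  rw [← card_toLeft_add_card_toRight, ← sum_filter, filter_mem_eq_inter, univ_inter]
  omega

omit [DecidableEq R] [Fintype Sym] in
theorem sum_ite_sub_add_sum_min_le (hD : ∀ σ, D σ ≤ Fintype.card R) (Z : Finset Sym)
    (a : Sym → ℕ) (t : Finset Sym) :
    ∑ σ ∈ t, (if σ ∈ Z then Fintype.card R - D σ else 0) + ∑ σ ∈ t, min (D σ) (a σ) ≤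
      ∑ σ ∈ t, if σ ∈ Z then Fintype.card R else a σ := by
  rw [← sum_add_distrib]
  refine sum_le_sum fun σ _ => ?_
  by_cases hσ : σ ∈ Z
  · simp only [hσ, if_true]
    have := hD σ
    omega
  · simp [hσ]

/-- Hall's condition for `assignmentGraph`: the cells of a set `S` of left vertices reach enough
slots by `hE1`, and if `S` contains dummies, they also reach all spare vertices, which is enough
by `hE2`. -/
theorem card_le_card_biUnion_assignmentGraph (hD : ∀ σ, D σ ≤ Fintype.card R)
    (hSD : ∑ σ, D σ ≤ #H) (hE1 : ∀ K ⊆ H, #K ≤ ∑ σ, #(admittingRows row adm K σ))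
    (hE2 : ∀ K ⊆ H, #K + ∑ σ, D σ ≤ #H + ∑ σ, min (D σ) #(admittingRows row adm K σ))
    (S : Finset (H ⊕ (Σ σ : Sym, Fin (Fintype.card R - D σ)))) :
    #S ≤ #(S.biUnion (assignmentGraph H row adm D)) := by
  have hS := card_le_card_toLeft_add_sum_dummies S
  have hslots := map_inl_reachableSlots_subset (row := row) (adm := adm) S
  have hgraph := card_le_card hslots
  rw [card_map, card_reachableSlots] at hgraph
  rw [← card_map (.subtype (· ∈ H))] at hS
  set K := S.toLeft.map (.subtype (· ∈ H))
  set Z := S.toRight.image Sigma.fst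
  have hKH : K ⊆ H := fun c hc => by
    obtain ⟨c', -, rfl⟩ := mem_map.1 hc
    exact c'.2
  rcases S.toRight.eq_empty_or_nonempty with hZ | ⟨d, hd⟩
  · have hZ : Z = ∅ := by simp [Z, hZ]
    simp only [hZ, notMem_empty, if_false, sum_const_zero, add_zero] at hS hgraph
    exact hS.trans ((hE1 K hKH).trans hgraph)
  · have hspare : (univ : Finset (Fin (#H - ∑ σ, D σ))).map .inr ⊆
        S.biUnion (assignmentGraph H row adm D) := fun x hx => by
      obtain ⟨k, -, rfl⟩ := mem_map.1 hx
      exact mem_biUnion.2 ⟨.inr d, mem_toRight.1 hd,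
        mem_union_right _ (mem_image.2 ⟨k, mem_univ _, rfl⟩)⟩
    have hall := card_le_card (union_subset hslots hspare)
    rw [card_union_of_disjoint (by simp [disjoint_left]), card_map, card_map,
      card_reachableSlots, card_univ, Fintype.card_fin] at hall
    have := sum_ite_sub_add_sum_min_le hD Z (fun σ => #(admittingRows row adm K σ)) univ
    have := hE2 K hKH
    omega

omit [DecidableEq R] [DecidableEq Sym] in
theorem card_assignmentGraph_left_eq_right (hD : ∀ σ, D σ ≤ Fintype.card R)
    (hSD : ∑ σ, D σ ≤ #H) :
    Fintype.card (H ⊕ (Σ σ : Sym, Fin (Fintype.card R - D σ))) =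
      Fintype.card ((Sym × R) ⊕ Fin (#H - ∑ σ, D σ)) := by
  have : ∑ σ, (Fintype.card R - D σ) + ∑ σ, D σ = Fintype.card Sym * Fintype.card R := by
    rw [← sum_add_distrib, sum_congr rfl fun σ _ => Nat.sub_add_cancel (hD σ), sum_const,
      card_univ, smul_eq_mul]
  simp only [Fintype.card_sum, Fintype.card_sigma, Fintype.card_fin, Fintype.card_coe,
    Fintype.card_prod]
  omega

/-- The slots `(σ, i)` are all matched, to cells of `H` that receive `σ` or to dummies of `σ`. -/
theorem le_card_filter_of_surjective
    {F : H ⊕ (Σ σ : Sym, Fin (Fintype.card R - D σ)) → (Sym × R) ⊕ Fin (#H - ∑ σ, D σ)}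
    (hFsurj : F.Surjective) (hFmem : ∀ x, F x ∈ assignmentGraph H row adm D x) {f : H → Sym}
    (hfF : ∀ c, F (.inl c) = .inl (f c, row c)) (hD : ∀ σ, D σ ≤ Fintype.card R) (σ : Sym) :
    D σ ≤ #{c | f c = σ} := by
  have hpre : ∀ i : R, Function.surjInv hFsurj (.inl (σ, i)) ∈
      (univ.filter fun c => f c = σ).disjSum (univ.filter fun d : Σ τ, _ => d.1 = σ) := fun i => by
    have h := Function.surjInv_eq hFsurj (.inl (σ, i))
    rcases hx : Function.surjInv hFsurj (.inl (σ, i)) with c | d <;> rw [hx] at h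
    · rw [hfF] at h
      simp only [Sum.inl.injEq, Prod.mk.injEq] at h
      simp [h.1]
    · have hm := hFmem (.inr d)
      rw [h] at hm
      simp only [assignmentGraph, mem_union, mem_image, mem_univ, true_and, Sum.inl.injEq,
        Prod.mk.injEq, reduceCtorEq, exists_false, or_false] at hm
      obtain ⟨_, hd, -⟩ := hm
      simp [hd]
  have hsum := card_le_card_of_injOn _ (fun i _ => hpre i)
    ((Function.injective_surjInv hFsurj).comp (Sum.inl_injective.comp (Prod.mk_right_injective σ))
      |>.injOn (s := (univ : Finset R)))
  have hdummies : #(univ.filter fun d : Σ τ, Fin (Fintype.card R - D τ) => d.1 = σ) ≤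
      Fintype.card R - D σ := by
    calc _ ≤ #((univ : Finset (Fin (Fintype.card R - D σ))).map (Function.Embedding.sigmaMk σ)) :=
          card_le_card fun ⟨τ, k⟩ hd => by
            obtain rfl : τ = σ := (mem_filter.1 hd).2
            exact mem_map.2 ⟨k, mem_univ _, rfl⟩
      _ = _ := by simp
  rw [card_univ, card_disjSum] at hsum
  have := hD σ
  omega

theorem exists_assignment (hD : ∀ σ, D σ ≤ Fintype.card R)
    (hE1 : ∀ K ⊆ H, #K ≤ ∑ σ, #(admittingRows row adm K σ))
    (hE2 : ∀ K ⊆ H, #K + ∑ σ, D σ ≤ #H + ∑ σ, min (D σ) #(admittingRows row adm K σ)) :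
    ∃ f : H → Sym, (∀ c : H, adm c (f c)) ∧
      (∀ c c' : H, f c = f c' → row c = row c' → c = c') ∧
      ∀ σ, D σ ≤ #{c | f c = σ} := by
  have hSD : ∑ σ, D σ ≤ #H := by
    simpa [admittingRows] using hE2 ∅ (empty_subset _)
  obtain ⟨F, hFinj, hFmem⟩ := (all_card_le_biUnion_card_iff_exists_injective _).1
    (card_le_card_biUnion_assignmentGraph hD hSD hE1 hE2)
  have hFsurj := ((Fintype.bijective_iff_injective_and_card F).2
    ⟨hFinj, card_assignmentGraph_left_eq_right hD hSD⟩).2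
  have hslot : ∀ c : H, ∃ σ, adm c σ ∧ F (.inl c) = .inl (σ, row c) := fun c => by
    obtain ⟨σ, hσ, h⟩ := mem_image.1 (hFmem (.inl c))
    exact ⟨σ, (mem_filter.1 hσ).2, h.symm⟩
  choose f hfadm hfF using hslot
  refine ⟨f, hfadm, fun c c' hf hrow => Sum.inl_injective (hFinj ?_),
    le_card_filter_of_surjective hFsurj hFmem hfF hD⟩
  rw [hfF, hfF, hf, hrow]

end Assignment

section HallInequalities

variable {P : Fin n → Fin n → Option (Fin n)} {r s : ℕ}

theorem IndepCells.injOn_fst {S : Finset (Fin n × Fin n)} (hS : IndepCells S) :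
    Set.InjOn Prod.fst (S : Set (Fin n × Fin n)) := fun c hc c' hc' h =>
  by_contra fun hne => (hS c hc c' hc' hne).1 h

theorem IndepCells.injOn_snd {S : Finset (Fin n × Fin n)} (hS : IndepCells S) :
    Set.InjOn Prod.snd (S : Set (Fin n × Fin n)) := fun c hc c' hc' h =>
  by_contra fun hne => (hS c hc c' hc' hne).2 h

theorem alpha_le_card_admittingRows (σ : Fin n) (T : Finset (Fin n × Fin n)) :
    alpha P σ T ≤ #(admittingRows Prod.fst (fun c τ => Supports P τ c) T σ) := by
  refine Finset.sup_le fun S hS => ?_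
  obtain ⟨hST, hind, hsupp⟩ := mem_filter.1 hS
  rw [← card_image_of_injOn hind.injOn_fst, admittingRows]
  exact card_le_card (image_subset_image fun c hc =>
    mem_filter.2 ⟨mem_powerset.1 hST hc, hsupp c hc⟩)

theorem HallCond.card_le_sum_card_admittingRows (hHC : HallCond n P)
    (K : Finset (Fin n × Fin n)) :
    #K ≤ ∑ σ, #(admittingRows Prod.fst (fun c τ => Supports P τ c) K σ) :=
  (hHC K).trans (sum_le_sum fun σ _ => alpha_le_card_admittingRows σ K)

theorem alpha_le_card_missingRow (σ : Fin n) {T : Finset (Fin n × Fin n)}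
    (hT : ∀ c ∈ T, P c.1 c.2 = none) : alpha P σ T ≤ #{i | MissingRow P σ i} := by
  refine Finset.sup_le fun S hS => ?_
  obtain ⟨hST, hind, hsupp⟩ := mem_filter.1 hS
  refine card_le_card_of_injOn Prod.fst (fun c hc => mem_filter.2 ⟨mem_univ _, ?_⟩)
    hind.injOn_fst
  rcases hsupp c hc with h | h
  · simp [hT c (mem_powerset.1 hST hc)] at h
  · exact h.2.1

noncomputable def rect (n r s : ℕ) : Finset (Fin n × Fin n) :=
  univ.filter fun c => (c.1 : ℕ) < r ∧ (c.2 : ℕ) < s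

theorem card_rect (hrn : r ≤ n) (hsn : s ≤ n) : #(rect n r s) = r * s := by
  have : rect n r s =
      ({i | (i : ℕ) < r} : Finset (Fin n)) ×ˢ ({j | (j : ℕ) < s} : Finset (Fin n)) := by
    ext c
    simp [rect]
  rw [this, card_product, card_fin_val_lt hrn, card_fin_val_lt hsn]

/-- An independent set meets the rows below the rectangle in at most `n - r` cells, the columns
right of it in at most `n - s` more cells, and `K` in at most one cell per row. -/
theorem alpha_compl_rect_union_le (hrn : r ≤ n) (hsn : s ≤ n) (σ : Fin n)
    (K : Finset (Fin n × Fin n)) :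
    alpha P σ ((rect n r s)ᶜ ∪ K) ≤
      (n - r) + (n - s) + #(admittingRows Prod.fst (fun c τ => Supports P τ c) K σ) := by
  refine Finset.sup_le fun S hS => ?_
  obtain ⟨hST, hind, hsupp⟩ := mem_filter.1 hS
  set S₁ := S.filter fun c => ¬ (c.1 : ℕ) < r
  set S₂ := S.filter fun c => (c.1 : ℕ) < r
  have h₁ : #S₁ ≤ n - r := by
    rw [← card_fin_val_not_lt hrn]
    exact card_le_card_of_injOn Prod.fst
      (fun c hc => mem_filter.2 ⟨mem_univ _, (mem_filter.1 hc).2⟩)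
      (hind.injOn_fst.mono (filter_subset _ _))
  have h₂ : #(S₂.filter fun c => ¬ (c.2 : ℕ) < s) ≤ n - s := by
    rw [← card_fin_val_not_lt hsn]
    exact card_le_card_of_injOn Prod.snd
      (fun c hc => mem_filter.2 ⟨mem_univ _, (mem_filter.1 hc).2⟩)
      (hind.injOn_snd.mono ((filter_subset _ _).trans (filter_subset _ _)))
  have h₃ : #(S₂.filter fun c => (c.2 : ℕ) < s) ≤
      #(admittingRows Prod.fst (fun c τ => Supports P τ c) K σ) := by
    refine card_le_card_of_injOn Prod.fst (fun c hc => ?_)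
      (hind.injOn_fst.mono ((filter_subset _ _).trans (filter_subset _ _)))
    obtain ⟨⟨hcS, hcr⟩, hcs⟩ := And.imp_left mem_filter.1 (mem_filter.1 hc)
    have hcK : c ∈ K := (mem_union.1 (mem_powerset.1 hST hcS)).resolve_left fun h =>
      mem_compl.1 h (mem_filter.2 ⟨mem_univ _, hcr, hcs⟩)
    exact mem_image_of_mem _ (mem_filter.2 ⟨hcK, hsupp c hcS⟩)
  have : #S₂ + #S₁ = #S := card_filter_add_card_filter_not _
  have : #(S₂.filter fun c => (c.2 : ℕ) < s) + #(S₂.filter fun c => ¬ (c.2 : ℕ) < s) = #S₂ :=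
    card_filter_add_card_filter_not _
  omega

end HallInequalities

section Holes

variable {P : Fin n → Fin n → Option (Fin n)} {r s : ℕ}

noncomputable def holes (r s : ℕ) (P : Fin n → Fin n → Option (Fin n)) :
    Finset (Fin n × Fin n) :=
  (rect n r s).filter fun c => P c.1 c.2 = none

theorem mem_holes {c : Fin n × Fin n} :
    c ∈ holes r s P ↔ (c.1 : ℕ) < r ∧ (c.2 : ℕ) < s ∧ P c.1 c.2 = none := by
  simp [holes, rect, and_assoc]

theorem eq_none_of_mem_holes {c : Fin n × Fin n} (hc : c ∈ holes r s P) : P c.1 c.2 = none :=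
  (mem_holes.1 hc).2.2

/-- The number of times `σ` still has to be placed for the Ryser condition to hold
(truncated subtraction). -/
def deficiency (n r s : ℕ) (P : Fin n → Fin n → Option (Fin n)) (σ : Fin n) : ℕ :=
  r + s - (n + #(symbolRows P σ))

variable (hshape : ∀ i j : Fin n, P i j ≠ none → i.val < r ∧ j.val < s)
  (hrn : r ≤ n) (hsn : s ≤ n)
include hshape hrn hsn

theorem card_filled_add_card_holes :
    #{c : Fin n × Fin n | P c.1 c.2 ≠ none} + #(holes r s P) = r * s := by
  have hfilled : ({c : Fin n × Fin n | P c.1 c.2 ≠ none} : Finset _) =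
      (rect n r s).filter fun c => ¬ P c.1 c.2 = none := by
    ext c
    simp only [rect, mem_filter, mem_univ, true_and]
    exact ⟨fun h => ⟨hshape c.1 c.2 h, h⟩, And.right⟩
  rw [hfilled, holes, add_comm, card_filter_add_card_filter_not, card_rect hrn hsn]

theorem alpha_add_deficiency_le {K : Finset (Fin n × Fin n)} (hK : K ⊆ holes r s P)
    (σ : Fin n) :
    alpha P σ ((rect n r s)ᶜ ∪ K) + deficiency n r s P σ ≤
      #{i | MissingRow P σ i} + min (deficiency n r s P σ)
        #(admittingRows Prod.fst (fun c τ => Supports P τ c) K σ) := by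
  have hempty : ∀ c ∈ (rect n r s)ᶜ ∪ K, P c.1 c.2 = none := fun c hc => by
    rcases mem_union.1 hc with h | h
    · by_contra hne
      exact mem_compl.1 h (mem_filter.2 ⟨mem_univ _, hshape c.1 c.2 hne⟩)
    · exact eq_none_of_mem_holes (hK h)
  have h₁ := alpha_le_card_missingRow σ hempty
  have h₂ := alpha_compl_rect_union_le (P := P) hrn hsn σ K
  have h₃ := card_missingRow_add_card_symbolRows (Q := P) σ
  unfold deficiency
  omega

/-- Hall's inequality for the empty cells outside the rectangle together with `K`. -/
theorem HallCond.card_add_sum_deficiency_le (hHC : HallCond n P) (hP : IsPLS n P)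
    {K : Finset (Fin n × Fin n)} (hK : K ⊆ holes r s P) :
    #K + ∑ σ, deficiency n r s P σ ≤
      #(holes r s P) + ∑ σ, min (deficiency n r s P σ)
        #(admittingRows Prod.fst (fun c τ => Supports P τ c) K σ) := by
  have hdisj : Disjoint (rect n r s)ᶜ K := disjoint_left.2 fun c hc hcK =>
    mem_compl.1 hc (mem_filter.2 ⟨mem_univ _, (mem_holes.1 (hK hcK)).1,
      (mem_holes.1 (hK hcK)).2.1⟩)
  have hHall := hHC ((rect n r s)ᶜ ∪ K)
  rw [card_union_of_disjoint hdisj, card_compl, card_rect hrn hsn, Fintype.card_prod,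
    Fintype.card_fin] at hHall
  have hlocal := sum_le_sum fun σ (_ : σ ∈ univ) =>
    alpha_add_deficiency_le hshape hrn hsn hK σ
  rw [sum_add_distrib, sum_add_distrib] at hlocal
  have hmissing := sum_congr rfl fun σ (_ : σ ∈ univ) =>
    card_missingRow_add_card_symbolRows (Q := P) σ
  rw [sum_add_distrib, hP.sum_card_symbolRows, sum_const, card_univ, Fintype.card_fin,
    smul_eq_mul] at hmissing
  have := card_filled_add_card_holes hshape hrn hsn
  have : r * s ≤ n * n := Nat.mul_le_mul hrn hsn
  omega

end Holes

section Filling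

variable {P : Fin n → Fin n → Option (Fin n)} {r s : ℕ}

noncomputable def fillHoles (P : Fin n → Fin n → Option (Fin n)) (H : Finset (Fin n × Fin n))
    (f : H → Fin n) : Fin n → Fin n → Option (Fin n) :=
  fun i j => if h : (i, j) ∈ H then some (f ⟨(i, j), h⟩) else P i j

theorem Supports.missing_of_eq_none {σ : Fin n} {c : Fin n × Fin n} (h : Supports P σ c)
    (hc : P c.1 c.2 = none) : MissingRow P σ c.1 ∧ MissingCol P σ c.2 := by
  rcases h with h | h
  · simp [hc] at h
  · exact h.2

theorem extends_fillHoles {H : Finset (Fin n × Fin n)} (hH : ∀ c ∈ H, P c.1 c.2 = none)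
    (f : H → Fin n) : Extends P (fillHoles P H f) := by
  intro i j σ h
  have : (i, j) ∉ H := fun hij => by simp [hH _ hij] at h
  simp [fillHoles, this, h]

variable {f : holes r s P → Fin n} (hsupp : ∀ c, Supports P (f c) c)
  (hrow : ∀ c c', f c = f c' → c.1.1 = c'.1.1 → c = c')
include hsupp hrow

theorem isLatinRect_fillHoles (hP : IsPLS n P)
    (hshape1 : ∀ i j : Fin n, P i j ≠ none → i.val < r ∧ j.val < s)
    (hshape2 : ∀ j : Fin n, j.val < s →
      (Finset.univ.filter (fun i : Fin n => i.val < r ∧ P i j = none)).card ≤ 1) :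
    IsLatinRect n r s (fillHoles P (holes r s P) f) := by
  have hmiss : ∀ c : holes r s P, MissingRow P (f c) c.1.1 ∧ MissingCol P (f c) c.1.2 :=
    fun c => (hsupp c).missing_of_eq_none (eq_none_of_mem_holes c.2)
  refine ⟨⟨fun i j j' σ h h' => ?_, fun i i' j σ h h' => ?_⟩, fun i j => ?_⟩ <;>
    simp only [fillHoles] at *
  · by_cases hj : (i, j) ∈ holes r s P <;> by_cases hj' : (i, j') ∈ holes r s P <;>
      simp only [hj, hj', dite_true, dite_false, Option.some_inj] at h h'
    · have := hrow ⟨_, hj⟩ ⟨_, hj'⟩ (h.trans h'.symm) rfl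
      exact congrArg (·.1.2) this
    · exact absurd (h ▸ h') ((hmiss ⟨_, hj⟩).1 j')
    · exact absurd (h' ▸ h) ((hmiss ⟨_, hj'⟩).1 j)
    · exact hP.1 i j j' σ h h'
  · by_cases hi : (i, j) ∈ holes r s P <;> by_cases hi' : (i', j) ∈ holes r s P <;>
      simp only [hi, hi', dite_true, dite_false, Option.some_inj] at h h'
    · have hcol : ∀ {k}, (k, j) ∈ holes r s P →
          k ∈ univ.filter fun k : Fin n => k.val < r ∧ P k j = none := fun hk =>
        mem_filter.2 ⟨mem_univ _, (mem_holes.1 hk).1, (mem_holes.1 hk).2.2⟩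
      exact card_le_one.1 (hshape2 j (mem_holes.1 hi).2.1) _ (hcol hi) _ (hcol hi')
    · exact absurd (h ▸ h') ((hmiss ⟨_, hi⟩).2 i')
    · exact absurd (h' ▸ h) ((hmiss ⟨_, hi'⟩).2 i)
    · exact hP.2 i i' j σ h h'
  · by_cases hij : (i, j) ∈ holes r s P
    · simp only [hij, dite_true, ne_eq, reduceCtorEq, not_false_eq_true, true_iff]
      exact ⟨(mem_holes.1 hij).1, (mem_holes.1 hij).2.1⟩
    · simp only [hij, dite_false]
      refine ⟨hshape1 i j, fun hin hnone => hij (mem_holes.2 ⟨hin.1, hin.2, ?_⟩)⟩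
      simpa using hnone

theorem ryserCondition_fillHoles (hdemand : ∀ σ, deficiency n r s P σ ≤ #{c | f c = σ}) :
    RyserCondition n r s (fillHoles P (holes r s P) f) := by
  intro σ
  set new := (univ.filter fun c : holes r s P => f c = σ).image fun c => c.1.1
  have hsub : symbolRows P σ ∪ new ⊆ symbolRows (fillHoles P (holes r s P) f) σ := by
    refine union_subset
      ((extends_fillHoles (fun _ => eq_none_of_mem_holes) f).symbolRows_subset σ) ?_
    intro i hi
    obtain ⟨c, hc, rfl⟩ := mem_image.1 hi
    refine mem_filter.2 ⟨mem_univ _, c.1.2, ?_⟩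
    simp [fillHoles, c.2, (mem_filter.1 hc).2]
  have hdisj : Disjoint (symbolRows P σ) new := disjoint_left.2 fun i hi hinew => by
    obtain ⟨j, hj⟩ := (mem_filter.1 hi).2
    obtain ⟨c, hc, rfl⟩ := mem_image.1 hinew
    exact (hsupp c).missing_of_eq_none (eq_none_of_mem_holes c.2) |>.1 j
      ((mem_filter.1 hc).2 ▸ hj)
  have hnew : #new = #{c | f c = σ} := card_image_of_injOn fun c hc c' hc' h =>
    hrow c c' (((mem_filter.1 hc).2).trans ((mem_filter.1 hc').2).symm) h
  have := card_le_card hsub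
  rw [card_union_of_disjoint hdisj, hnew] at this
  have := hdemand σ
  unfold deficiency at this
  omega

end Filling

theorem stmt9_general (n r s : ℕ) (hrn : r ≤ n) (hsn : s ≤ n)
    (P : Fin n → Fin n → Option (Fin n)) (hP : IsPLS n P)
    (hshape1 : ∀ i j : Fin n, P i j ≠ none → i.val < r ∧ j.val < s)
    (hshape2 : ∀ j : Fin n, j.val < s →
      (Finset.univ.filter (fun i : Fin n => i.val < r ∧ P i j = none)).card ≤ 1) :
    (∃ L, Completes n P L) ↔ HallCond n P := by
  refine ⟨fun ⟨L, hL⟩ => hL.hallCond, fun hHC => ?_⟩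
  have hD : ∀ σ, deficiency n r s P σ ≤ Fintype.card (Fin n) := fun σ => by
    rw [deficiency, Fintype.card_fin]
    omega
  obtain ⟨f, hsupp, hrow, hdemand⟩ := exists_assignment (H := holes r s P) (row := Prod.fst)
    (adm := fun c σ => Supports P σ c) hD (fun K _ => hHC.card_le_sum_card_admittingRows K)
    (fun K hK => hHC.card_add_sum_deficiency_le hshape1 hrn hsn hP hK)
  obtain ⟨L, hL⟩ := (isLatinRect_fillHoles hsupp hrow hP hshape1 hshape2).exists_completes
    (ryserCondition_fillHoles hsupp hrow hdemand) hrn hsn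
  exact ⟨L, hL.of_extends (extends_fillHoles (fun _ => eq_none_of_mem_holes) f)⟩

theorem stmt9 (n r s t : ℕ) (hr : 1 ≤ r) (hrn : r ≤ n) (hs : 1 ≤ s) (hsn : s ≤ n)
    (P : Fin n → Fin n → Option (Fin n)) (hP : IsPLS n P)
    (hshape1 : ∀ i j : Fin n, P i j ≠ none → i.val < r ∧ j.val < s)
    (hshape2 : ∀ j : Fin n, j.val < s →
      (Finset.univ.filter (fun i : Fin n => i.val < r ∧ P i j = none)).card ≤ 1)
    (ht : (Finset.univ.filter
      (fun c : Fin n × Fin n => c.1.val < r ∧ c.2.val < s ∧ P c.1 c.2 = none)).card = t) :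
    (∃ L, Completes n P L) ↔ HallCond n P :=
  stmt9_general n r s hrn hsn P hP hshape1 hshape2
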